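/- arXiv:1309.3812 — 3 statements merged into one kernel-verified Lean document; each statement's English description precedes it below -/
import Mathlib

section
/- Let p be a prime, ℓ a positive integer with ℓ ≡ 3 (mod 4), and d = (ℓ+1)/4. Then for all integers a, b and all real q with 0 < q < 1, one has ∑_{m,n ∈ ℤ} q^{Q_d(pm+a, pn+b)} = θ_{p,b}(q^{p²ℓ})·θ_{p,2a+b}(q^{p²}) + θ_{p,b+p}(q^{p²ℓ})·θ_{p,2a+b+p}(q^{p²}), all sums being absolutely convergent. -/
noncomputable section

/-- The positive definite quadratic form `Q_d(x,y) = x² + xy + d y²`. -/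
def Qform (d : ℕ) (x y : ℤ) : ℤ := x ^ 2 + x * y + (d : ℤ) * y ^ 2

/-- The one-dimensional theta series `θ_{p,j}(x) = ∑_{n ∈ ℤ} x^{(n + j/(2p))²}`. -/
def theta1 (p : ℕ) (j : ℤ) (x : ℝ) : ℝ :=
  ∑' n : ℤ, x ^ (((n : ℝ) + (j : ℝ) / (2 * (p : ℝ))) ^ 2)

lemma summable_exp_sq {B : ℝ} (hB : B < 0) (c : ℝ) :
    Summable fun n : ℤ => Real.exp (B * ((n : ℝ) + c) ^ 2) := by
  set K : ℝ := (2 * |c| + 1) ^ 2 with hK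
  have hkey : ∀ x : ℝ, |x| - K ≤ (x + c) ^ 2 := by
    intro x
    nlinarith [sq_nonneg (|x| - |c| - 1), abs_nonneg x, abs_nonneg c, sq_abs x, sq_abs c,
      abs_mul x c, neg_abs_le (x * c)]
  set r : ℝ := Real.exp B with hr
  have hr0 : 0 < r := Real.exp_pos B
  have hr1 : r < 1 := by rw [hr, Real.exp_lt_one_iff]; exact hB
  have hgeo : Summable fun n : ℤ => Real.exp (-B * K) * r ^ n.natAbs := by
    apply Summable.mul_left
    apply Summable.of_nat_of_neg <;> simpa using summable_geometric_of_lt_one hr0.le hr1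
  refine hgeo.of_nonneg_of_le (fun n => (Real.exp_pos _).le) fun n => ?_
  have h1 : r ^ n.natAbs = Real.exp (B * n.natAbs) := by
    rw [mul_comm, Real.exp_nat_mul]
  rw [h1, ← Real.exp_add]
  apply Real.exp_le_exp.2
  have h2 : ((n.natAbs : ℕ) : ℝ) = |(n : ℝ)| := by
    rw [Nat.cast_natAbs]; push_cast; ring
  rw [h2]
  have h3 := mul_le_mul_of_nonpos_left (hkey (n : ℝ)) hB.le
  linarith

lemma summable_theta {x : ℝ} (hx0 : 0 < x) (hx1 : x < 1) (c : ℝ) :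
    Summable fun n : ℤ => x ^ (((n : ℝ) + c) ^ 2) := by
  refine (summable_exp_sq (Real.log_neg hx0 hx1) c).congr fun n => ?_
  rw [Real.rpow_def_of_pos hx0]

def evenSet : Set (ℤ × ℤ) := {mn : ℤ × ℤ | mn.2 % 2 = 0}

def evenEquiv : ℤ × ℤ ≃ ↥evenSet where
  toFun st := ⟨(st.2 - st.1, 2 * st.1), by show (2 : ℤ) * st.1 % 2 = 0; omega⟩
  invFun x := (x.1.2 / 2, x.1.1 + x.1.2 / 2)
  left_inv := by rintro ⟨s, t⟩; simp only; ext <;> simp <;> omega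
  right_inv := by
    rintro ⟨⟨m, n⟩, h⟩
    have h' : n % 2 = 0 := h
    apply Subtype.ext
    simp only
    ext <;> simp <;> omega

def oddEquiv : ℤ × ℤ ≃ ↥(evenSetᶜ) where
  toFun st := ⟨(st.2 - st.1, 2 * st.1 + 1), by
    show ¬((2 : ℤ) * st.1 + 1) % 2 = 0; omega⟩
  invFun x := ((x.1.2 - 1) / 2, x.1.1 + (x.1.2 - 1) / 2)
  left_inv := by rintro ⟨s, t⟩; simp only; ext <;> simp <;> omega
  right_inv := by
    rintro ⟨⟨m, n⟩, h⟩
    have h' : ¬ (n % 2 = 0) := h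
    apply Subtype.ext
    simp only
    ext <;> simp <;> omega

lemma prod_tsum {g h : ℤ → ℝ} (hg : Summable g) (hh : Summable h)
    (hg0 : ∀ n, 0 ≤ g n) (hh0 : ∀ n, 0 ≤ h n) :
    ∑' st : ℤ × ℤ, g st.1 * h st.2 = (∑' n, g n) * (∑' n, h n) := by
  rw [Summable.tsum_prod' (hg.mul_of_nonneg hh hg0 hh0) (fun b => (hh.mul_left (g b)))]
  simp_rw [tsum_mul_left]
  rw [tsum_mul_right]

set_option maxHeartbeats 1000000 in
theorem stmt0 (p : ℕ) (hp : p.Prime) (ℓ : ℕ) (hℓpos : 0 < ℓ) (hℓ : ℓ % 4 = 3)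
    (d : ℕ) (hd : d = (ℓ + 1) / 4) (a b : ℤ) (q : ℝ) (hq0 : 0 < q) (hq1 : q < 1) :
    Summable (fun mn : ℤ × ℤ =>
      q ^ ((Qform d ((p : ℤ) * mn.1 + a) ((p : ℤ) * mn.2 + b) : ℝ))) ∧
    (∀ j : ℤ, ∀ x : ℝ, 0 < x → x < 1 →
      Summable (fun n : ℤ => x ^ (((n : ℝ) + (j : ℝ) / (2 * (p : ℝ))) ^ 2))) ∧
    (∑' mn : ℤ × ℤ, q ^ ((Qform d ((p : ℤ) * mn.1 + a) ((p : ℤ) * mn.2 + b) : ℝ))) =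
      theta1 p b (q ^ (p ^ 2 * ℓ)) * theta1 p (2 * a + b) (q ^ (p ^ 2)) +
      theta1 p (b + (p : ℤ)) (q ^ (p ^ 2 * ℓ)) * theta1 p (2 * a + b + (p : ℤ)) (q ^ (p ^ 2)) := by
  have hp0 : (p : ℝ) ≠ 0 := Nat.cast_ne_zero.2 hp.pos.ne'
  have hd4 : 4 * d = ℓ + 1 := by omega
  have hdr : (d : ℝ) = ((ℓ : ℝ) + 1) / 4 := by
    have : ((4 * d : ℕ) : ℝ) = ((ℓ + 1 : ℕ) : ℝ) := by rw [hd4]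
    push_cast at this; linarith
  set X : ℝ := q ^ (p ^ 2) with hX
  set XL : ℝ := q ^ (p ^ 2 * ℓ) with hXL
  have hX0 : 0 < X := pow_pos hq0 _
  have hXL0 : 0 < XL := pow_pos hq0 _
  have hX1 : X < 1 := pow_lt_one₀ hq0.le hq1 (pow_ne_zero 2 hp.pos.ne')
  have hXL1 : XL < 1 := pow_lt_one₀ hq0.le hq1
    (Nat.mul_ne_zero (pow_ne_zero 2 hp.pos.ne') hℓpos.ne')
  set F : ℤ × ℤ → ℝ :=
    fun mn => q ^ ((Qform d ((p : ℤ) * mn.1 + a) ((p : ℤ) * mn.2 + b) : ℝ)) with hF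
  set g₁ : ℤ → ℝ := fun n => XL ^ (((n : ℝ) + (b : ℝ) / (2 * (p : ℝ))) ^ 2) with hg₁
  set h₁ : ℤ → ℝ := fun n =>
    X ^ (((n : ℝ) + ((2 * a + b : ℤ) : ℝ) / (2 * (p : ℝ))) ^ 2) with hh₁
  set g₂ : ℤ → ℝ := fun n =>
    XL ^ (((n : ℝ) + ((b + (p : ℤ) : ℤ) : ℝ) / (2 * (p : ℝ))) ^ 2) with hg₂
  set h₂ : ℤ → ℝ := fun n =>
    X ^ (((n : ℝ) + ((2 * a + b + (p : ℤ) : ℤ) : ℝ) / (2 * (p : ℝ))) ^ 2) with hh₂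
  have Sg₁ : Summable g₁ := summable_theta hXL0 hXL1 _
  have Sh₁ : Summable h₁ := summable_theta hX0 hX1 _
  have Sg₂ : Summable g₂ := summable_theta hXL0 hXL1 _
  have Sh₂ : Summable h₂ := summable_theta hX0 hX1 _
  have g₁0 : ∀ n, 0 ≤ g₁ n := fun n => Real.rpow_nonneg hXL0.le _
  have h₁0 : ∀ n, 0 ≤ h₁ n := fun n => Real.rpow_nonneg hX0.le _
  have g₂0 : ∀ n, 0 ≤ g₂ n := fun n => Real.rpow_nonneg hXL0.le _
  have h₂0 : ∀ n, 0 ≤ h₂ n := fun n => Real.rpow_nonneg hX0.le _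
  -- key term identities
  have key1 : ∀ st : ℤ × ℤ, F (st.2 - st.1, 2 * st.1) = g₁ st.1 * h₁ st.2 := by
    rintro ⟨s, t⟩
    simp only [hF, hg₁, hh₁, hX, hXL]
    rw [← Real.rpow_natCast q (p ^ 2 * ℓ), ← Real.rpow_natCast q (p ^ 2),
      ← Real.rpow_mul hq0.le, ← Real.rpow_mul hq0.le, ← Real.rpow_add hq0]
    congr 1
    simp only [Qform]
    push_cast
    rw [hdr]
    field_simp
    ring
  have key2 : ∀ st : ℤ × ℤ, F (st.2 - st.1, 2 * st.1 + 1) = g₂ st.1 * h₂ st.2 := by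
    rintro ⟨s, t⟩
    simp only [hF, hg₂, hh₂, hX, hXL]
    rw [← Real.rpow_natCast q (p ^ 2 * ℓ), ← Real.rpow_natCast q (p ^ 2),
      ← Real.rpow_mul hq0.le, ← Real.rpow_mul hq0.le, ← Real.rpow_add hq0]
    congr 1
    simp only [Qform]
    push_cast
    rw [hdr]
    field_simp
    ring
  have hs1 : Summable fun x : ↥evenSet => F ↑x := by
    rw [← Equiv.summable_iff evenEquiv]
    exact (Sg₁.mul_of_nonneg Sh₁ g₁0 h₁0).congr fun st => (key1 st).symm
  have hs2 : Summable fun x : ↥(evenSetᶜ) => F ↑x := by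
    rw [← Equiv.summable_iff oddEquiv]
    exact (Sg₂.mul_of_nonneg Sh₂ g₂0 h₂0).congr fun st => (key2 st).symm
  have hSum : Summable F := summable_subtype_and_compl.1 ⟨hs1, hs2⟩
  refine ⟨hSum, fun j x hx0 hx1 => summable_theta hx0 hx1 _, ?_⟩
  have e1 : (∑' x : ↥evenSet, F ↑x) = theta1 p b XL * theta1 p (2 * a + b) X := by
    rw [← Equiv.tsum_eq evenEquiv (fun x : ↥evenSet => F ↑x)]
    calc (∑' st : ℤ × ℤ, F ↑(evenEquiv st))
        = ∑' st : ℤ × ℤ, g₁ st.1 * h₁ st.2 := tsum_congr key1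
      _ = (∑' n, g₁ n) * (∑' n, h₁ n) := prod_tsum Sg₁ Sh₁ g₁0 h₁0
      _ = _ := rfl
  have e2 : (∑' x : ↥(evenSetᶜ), F ↑x) =
      theta1 p (b + (p : ℤ)) XL * theta1 p (2 * a + b + (p : ℤ)) X := by
    rw [← Equiv.tsum_eq oddEquiv (fun x : ↥(evenSetᶜ) => F ↑x)]
    calc (∑' st : ℤ × ℤ, F ↑(oddEquiv st))
        = ∑' st : ℤ × ℤ, g₂ st.1 * h₂ st.2 := tsum_congr key2
      _ = (∑' n, g₂ n) * (∑' n, h₂ n) := prod_tsum Sg₂ Sh₂ g₂0 h₂0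
      _ = _ := rfl
  rw [← Summable.tsum_add_tsum_compl (f := F) (s := evenSet) hs1 hs2, e1, e2]
end
end

section
/- Let p be a prime and j, k integers. Then θ_{p,j}(q) = θ_{p,k}(q) for all real q with 0 < q < 1 if and only if j ≡ k (mod 2p) or j ≡ −k (mod 2p). -/
noncomputable section

open Real
set_option maxHeartbeats 1000000

namespace ThetaAux

lemma pow_bound {x : ℝ} (hx : 0 < x) (hx1 : x < 1) {e : ℝ} (n : ℕ) (he : (n : ℝ) / 4 ≤ e) :
    x ^ e ≤ (x ^ (1/4 : ℝ)) ^ n := by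
  rw [← Real.rpow_natCast (x ^ (1/4 : ℝ)) n, ← Real.rpow_mul hx.le]
  exact Real.rpow_le_rpow_of_exponent_ge hx hx1.le (by linarith)

variable {x γ : ℝ}

lemma exp_bound_pos (hγ0 : 0 ≤ γ) (n : ℕ) : ((n : ℝ)) / 4 ≤ ((n : ℝ) + γ) ^ 2 := by
  rcases Nat.eq_zero_or_pos n with h | h
  · simp [h]; positivity
  · have : (1 : ℝ) ≤ (n : ℝ) := by exact_mod_cast h
    nlinarith

lemma exp_bound_neg (hγ0 : 0 ≤ γ) (hγ : γ ≤ 1/2) (n : ℕ) :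
    ((n : ℝ) + 1) / 4 ≤ (-((n : ℝ) + 1) + γ) ^ 2 := by
  have h1 : (0 : ℝ) ≤ (n : ℝ) := Nat.cast_nonneg n
  nlinarith

lemma summable_theta (hx : 0 < x) (hx1 : x < 1) (hγ0 : 0 ≤ γ) (hγ : γ ≤ 1/2) :
    Summable (fun n : ℤ => x ^ (((n : ℝ) + γ) ^ 2)) := by
  have hr0 : (0 : ℝ) ≤ x ^ (1/4 : ℝ) := (rpow_pos_of_pos hx _).le
  have hr1 : x ^ (1/4 : ℝ) < 1 := rpow_lt_one hx.le hx1 (by norm_num)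
  have hgeom : Summable (fun n : ℕ => (x ^ (1/4 : ℝ)) ^ n) :=
    summable_geometric_of_lt_one hr0 hr1
  apply Summable.of_nat_of_neg_add_one
  · refine Summable.of_nonneg_of_le (fun n => (rpow_pos_of_pos hx _).le) (fun n => ?_) hgeom
    refine pow_bound hx hx1 n ?_
    push_cast
    exact exp_bound_pos hγ0 n
  · refine Summable.of_nonneg_of_le (fun n => (rpow_pos_of_pos hx _).le) (fun n => ?_) hgeom
    refine pow_bound hx hx1 n ?_
    push_cast
    have := exp_bound_neg hγ0 hγ n
    nlinarith [Nat.cast_nonneg (α := ℝ) n]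

lemma theta_lower (hx : 0 < x) (hx1 : x < 1) (hγ0 : 0 ≤ γ) (hγ : γ ≤ 1/2) :
    x ^ (γ ^ 2) ≤ ∑' n : ℤ, x ^ (((n : ℝ) + γ) ^ 2) := by
  have h := Summable.le_tsum (summable_theta hx hx1 hγ0 hγ) 0
    (fun n _ => (rpow_pos_of_pos hx _).le)
  simpa using h

lemma theta_upper (hx : 0 < x) (hx1 : x < 1) (hγ0 : 0 ≤ γ) (hγ : γ ≤ 1/2)
    (hr2 : x ^ (1/4 : ℝ) ≤ 1/2) :
    ∑' n : ℤ, x ^ (((n : ℝ) + γ) ^ 2) ≤ x ^ (γ ^ 2) + 4 * x ^ (1/4 : ℝ) := by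
  set r := x ^ (1/4 : ℝ) with hr
  have hr0 : (0 : ℝ) < r := rpow_pos_of_pos hx _
  have hr1 : r < 1 := rpow_lt_one hx.le hx1 (by norm_num)
  have hgeom : Summable (fun n : ℕ => r ^ n) := summable_geometric_of_lt_one hr0.le hr1
  have hgeom1 : Summable (fun n : ℕ => r ^ (n + 1)) := by
    simpa [pow_succ'] using hgeom.mul_left r
  have hpos : Summable (fun n : ℕ => x ^ ((((n : ℤ) : ℝ) + γ) ^ 2)) := by
    refine Summable.of_nonneg_of_le (fun n => (rpow_pos_of_pos hx _).le) (fun n => ?_) hgeom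
    refine pow_bound hx hx1 n ?_
    push_cast
    exact exp_bound_pos hγ0 n
  have hneg : Summable (fun n : ℕ => x ^ (((((-(n + 1) : ℤ)) : ℝ) + γ) ^ 2)) := by
    refine Summable.of_nonneg_of_le (fun n => (rpow_pos_of_pos hx _).le)
      (fun n => ?_) hgeom1
    refine pow_bound hx hx1 (n + 1) ?_
    push_cast
    exact exp_bound_neg hγ0 hγ n
  have hgeomsum : ∑' n : ℕ, r ^ (n + 1) ≤ 2 * r := by
    have h3 : ∑' n : ℕ, r ^ (n + 1) = r * (1 - r)⁻¹ := by
      simp only [pow_succ']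
      rw [tsum_mul_left, tsum_geometric_of_lt_one hr0.le hr1]
    rw [h3]
    have hinv : (0 : ℝ) < 1 - r := by linarith
    have h1 := mul_inv_cancel₀ (ne_of_gt hinv)
    nlinarith [inv_nonneg.mpr hinv.le]
  rw [tsum_of_nat_of_neg_add_one (f := fun m : ℤ => x ^ (((m : ℝ) + γ) ^ 2)) hpos hneg]
  have hpos1 : Summable (fun n : ℕ => x ^ (((((n + 1 : ℕ) : ℤ)) : ℝ) + γ) ^ 2) := by
    refine Summable.of_nonneg_of_le (fun n => (rpow_pos_of_pos hx _).le)
      (fun n => ?_) hgeom1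
    refine pow_bound hx hx1 (n + 1) ?_
    push_cast
    have := exp_bound_pos hγ0 (n + 1)
    push_cast at this
    linarith
  have hS1 : ∑' n : ℕ, x ^ ((((n : ℤ) : ℝ) + γ) ^ 2) ≤ x ^ (γ ^ 2) + 2 * r := by
    rw [Summable.tsum_eq_zero_add hpos]
    have h0 : x ^ (((((0 : ℕ) : ℤ) : ℝ) + γ) ^ 2) = x ^ (γ ^ 2) := by norm_num
    have htail : ∑' n : ℕ, x ^ (((((n + 1 : ℕ) : ℤ)) : ℝ) + γ) ^ 2 ≤ ∑' n : ℕ, r ^ (n + 1) := by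
      refine Summable.tsum_le_tsum (fun n => ?_) hpos1 hgeom1
      refine pow_bound hx hx1 (n + 1) ?_
      push_cast
      have := exp_bound_pos hγ0 (n + 1)
      push_cast at this
      linarith
    rw [h0]
    linarith [le_trans htail hgeomsum]
  have hS2 : ∑' n : ℕ, x ^ (((((-(n + 1) : ℤ)) : ℝ) + γ) ^ 2) ≤ 2 * r := by
    refine le_trans (Summable.tsum_le_tsum (fun n => ?_) hneg hgeom1) hgeomsum
    refine pow_bound hx hx1 (n + 1) ?_
    push_cast
    exact exp_bound_neg hγ0 hγ n
  linarith

lemma key (p : ℕ) (hp : 0 < p) {a b : ℤ} (ha : 0 ≤ a) (hab : a < b) (hb : b ≤ (p : ℤ)) :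
    ∃ x : ℝ, 0 < x ∧ x < 1 ∧ theta1 p b x < theta1 p a x := by
  have hp' : (0 : ℝ) < (p : ℝ) := by exact_mod_cast hp
  have hP : (0 : ℝ) < 2 * (p : ℝ) := by linarith
  have hab' : (a : ℝ) < (b : ℝ) := by exact_mod_cast hab
  have ha' : (0 : ℝ) ≤ (a : ℝ) := by exact_mod_cast ha
  have hb' : (b : ℝ) ≤ (p : ℝ) := by exact_mod_cast hb
  set α : ℝ := (a : ℝ) / (2 * (p : ℝ)) with hαdef
  set β : ℝ := (b : ℝ) / (2 * (p : ℝ)) with hβdef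
  have hα0 : 0 ≤ α := div_nonneg ha' hP.le
  have hαβ : α < β := by rw [hαdef, hβdef]; gcongr
  have hβ2 : β ≤ 1/2 := by
    rw [hβdef, div_le_iff₀ hP]; linarith
  have hα2 : α ≤ 1/2 := by linarith
  set δ : ℝ := β ^ 2 - α ^ 2 with hδdef
  have hδ : 0 < δ := by
    have : α ^ 2 < β ^ 2 := by nlinarith
    rw [hδdef]; linarith
  set x₀ : ℝ := (1/5 : ℝ) ^ (1/δ : ℝ) with hx₀def
  have hx₀ : 0 < x₀ := rpow_pos_of_pos (by norm_num) _
  set x : ℝ := min x₀ (1/16) / 2 with hxdef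
  have hx : 0 < x := by
    rw [hxdef]
    have : 0 < min x₀ (1/16 : ℝ) := lt_min hx₀ (by norm_num)
    linarith
  have hx16 : x ≤ 1/16 := by
    rw [hxdef]
    have := min_le_right x₀ (1/16 : ℝ)
    linarith
  have hx1 : x < 1 := by linarith
  have hxx0 : x < x₀ := by
    rw [hxdef]
    have := min_le_left x₀ (1/16 : ℝ)
    linarith
  have hr2 : x ^ (1/4 : ℝ) ≤ 1/2 := by
    calc x ^ (1/4 : ℝ) ≤ (1/16 : ℝ) ^ (1/4 : ℝ) :=
          Real.rpow_le_rpow hx.le hx16 (by norm_num)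
      _ = 1/2 := by
          rw [show (1/16 : ℝ) = (1/2 : ℝ) ^ (4 : ℕ) by norm_num,
            ← Real.rpow_natCast ((1 : ℝ)/2) 4, ← Real.rpow_mul (by norm_num : (0:ℝ) ≤ 1/2)]
          norm_num
  have hδpow : x ^ δ < 1/5 := by
    have h1 : x₀ ^ δ = 1/5 := by
      rw [hx₀def, ← Real.rpow_mul (by norm_num : (0:ℝ) ≤ 1/5),
        one_div_mul_cancel hδ.ne', Real.rpow_one]
    calc x ^ δ < x₀ ^ δ := Real.rpow_lt_rpow hx.le hxx0 hδ
      _ = 1/5 := h1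
  refine ⟨x, hx, hx1, ?_⟩
  show (∑' n : ℤ, x ^ (((n : ℝ) + (b : ℝ) / (2 * (p : ℝ))) ^ 2)) <
    ∑' n : ℤ, x ^ (((n : ℝ) + (a : ℝ) / (2 * (p : ℝ))) ^ 2)
  rw [← hαdef, ← hβdef]
  have hsplit : x ^ (β ^ 2) = x ^ (α ^ 2) * x ^ δ := by
    rw [← Real.rpow_add hx, hδdef]; ring_nf
  calc ∑' n : ℤ, x ^ (((n : ℝ) + β) ^ 2)
      ≤ x ^ (β ^ 2) + 4 * x ^ (1/4 : ℝ) :=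
        theta_upper hx hx1 (by linarith) hβ2 hr2
    _ ≤ 5 * x ^ (β ^ 2) := by
        have h14 : x ^ (1/4 : ℝ) ≤ x ^ (β ^ 2) :=
          Real.rpow_le_rpow_of_exponent_ge hx hx1.le (by nlinarith)
        linarith
    _ < x ^ (α ^ 2) := by
        have h1 : 0 < x ^ (α ^ 2) := rpow_pos_of_pos hx _
        have h2 : 0 < x ^ δ := rpow_pos_of_pos hx _
        rw [hsplit]
        nlinarith
    _ ≤ ∑' n : ℤ, x ^ (((n : ℝ) + α) ^ 2) := theta_lower hx hx1 hα0 hα2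

lemma theta1_neg (p : ℕ) (j : ℤ) (x : ℝ) : theta1 p (-j) x = theta1 p j x := by
  unfold theta1
  rw [← (Equiv.neg ℤ).tsum_eq (fun n : ℤ => x ^ (((n : ℝ) + ((-j : ℤ) : ℝ) / (2 * (p : ℝ))) ^ 2))]
  refine tsum_congr fun n => ?_
  simp only [Equiv.neg_apply]
  congr 1
  push_cast
  ring

lemma theta1_period (p : ℕ) (hp : 0 < p) (j t : ℤ) (x : ℝ) :
    theta1 p (j + 2 * (p : ℤ) * t) x = theta1 p j x := by
  have hp' : (p : ℝ) ≠ 0 := by positivity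
  unfold theta1
  rw [← (Equiv.addRight t).tsum_eq (fun n : ℤ => x ^ (((n : ℝ) + (j : ℝ) / (2 * (p : ℝ))) ^ 2))]
  refine tsum_congr fun n => ?_
  simp only [Equiv.coe_addRight]
  congr 1
  push_cast
  field_simp
  ring

lemma theta1_congr (p : ℕ) (hp : 0 < p) {j k : ℤ}
    (h : j ≡ k [ZMOD (2 * (p : ℤ))] ∨ j ≡ -k [ZMOD (2 * (p : ℤ))]) (x : ℝ) :
    theta1 p j x = theta1 p k x := by
  rcases h with h | h
  · obtain ⟨t, ht⟩ := (Int.modEq_iff_dvd.mp h)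
    have hj : j = k + 2 * (p : ℤ) * (-t) := by linarith [ht]
    rw [hj, theta1_period p hp k (-t) x]
  · obtain ⟨t, ht⟩ := (Int.modEq_iff_dvd.mp h)
    have hj : j = -k + 2 * (p : ℤ) * (-t) := by linarith [ht]
    rw [hj, theta1_period p hp (-k) (-t) x, theta1_neg]

lemma exists_rep (p : ℕ) (hp : 0 < p) (j : ℤ) :
    ∃ m : ℤ, 0 ≤ m ∧ m ≤ (p : ℤ) ∧
      (j ≡ m [ZMOD (2 * (p : ℤ))] ∨ j ≡ -m [ZMOD (2 * (p : ℤ))]) := by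
  have hP : (0 : ℤ) < 2 * (p : ℤ) := by positivity
  set a : ℤ := j % (2 * (p : ℤ)) with hadef
  have ha0 : 0 ≤ a := Int.emod_nonneg j hP.ne'
  have ha2 : a < 2 * (p : ℤ) := Int.emod_lt_of_pos j hP
  have hja : j ≡ a [ZMOD (2 * (p : ℤ))] := (Int.emod_emod_of_dvd j dvd_rfl).symm
  by_cases hc : a ≤ (p : ℤ)
  · exact ⟨a, ha0, hc, Or.inl hja⟩
  · refine ⟨2 * (p : ℤ) - a, by omega, by omega, Or.inr ?_⟩
    have : a ≡ -(2 * (p : ℤ) - a) [ZMOD (2 * (p : ℤ))] := by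
      rw [Int.modEq_iff_dvd]
      exact ⟨-1, by ring⟩
    exact hja.trans this

lemma rep_unique (p : ℕ) (hp : 0 < p) {m m' : ℤ} (h0 : 0 ≤ m) (h1 : m ≤ (p : ℤ))
    (h0' : 0 ≤ m') (h1' : m' ≤ (p : ℤ))
    (h : m ≡ m' [ZMOD (2 * (p : ℤ))] ∨ m ≡ -m' [ZMOD (2 * (p : ℤ))]) : m = m' := by
  have hP : (0 : ℤ) < 2 * (p : ℤ) := by positivity
  rcases h with h | h
  · have hd := Int.modEq_iff_dvd.mp h
    have := Int.eq_zero_of_abs_lt_dvd hd (by rw [abs_lt]; omega)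
    omega
  · have hd := Int.modEq_iff_dvd.mp h
    obtain ⟨c, hc⟩ := hd
    have hc0 : 0 ≤ -c := by nlinarith
    have hc1 : -c ≤ 1 := by nlinarith
    rcases (by omega : c = 0 ∨ c = -1) with rfl | rfl <;> omega

end ThetaAux

theorem stmt1 (p : ℕ) (hp : p.Prime) (j k : ℤ) :
    (∀ q : ℝ, 0 < q → q < 1 → theta1 p j q = theta1 p k q) ↔
      (j ≡ k [ZMOD (2 * (p : ℤ))] ∨ j ≡ -k [ZMOD (2 * (p : ℤ))]) := by
  have hp0 : 0 < p := hp.pos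
  constructor
  · intro H
    by_contra hcon
    push_neg at hcon
    obtain ⟨h1, h2⟩ := hcon
    obtain ⟨m, hm0, hm1, hm⟩ := ThetaAux.exists_rep p hp0 j
    obtain ⟨m', hm0', hm1', hm'⟩ := ThetaAux.exists_rep p hp0 k
    have hne : m ≠ m' := by
      intro he
      subst he
      rcases hm with hj | hj <;> rcases hm' with hk | hk
      · exact h1 (hj.trans hk.symm)
      · have hkm : -k ≡ m [ZMOD (2 * (p : ℤ))] := by simpa using hk.neg
        exact h2 (hj.trans hkm.symm)
      · have hkm : -m ≡ -k [ZMOD (2 * (p : ℤ))] := hk.neg.symm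
        exact h2 (hj.trans hkm)
      · exact h1 (hj.trans hk.symm)
    have hTm : ∀ x : ℝ, 0 < x → x < 1 → theta1 p m x = theta1 p m' x := by
      intro x hx hx1
      calc theta1 p m x = theta1 p j x := (ThetaAux.theta1_congr p hp0 hm x).symm
        _ = theta1 p k x := H x hx hx1
        _ = theta1 p m' x := ThetaAux.theta1_congr p hp0 hm' x
    rcases hne.lt_or_gt with hlt | hlt
    · obtain ⟨x, hx, hx1, hkey⟩ := ThetaAux.key p hp0 hm0 hlt hm1'
      exact hkey.ne' (hTm x hx hx1)
    · obtain ⟨x, hx, hx1, hkey⟩ := ThetaAux.key p hp0 hm0' hlt hm1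
      exact hkey.ne (hTm x hx hx1)
  · intro h q hq hq1
    exact ThetaAux.theta1_congr p hp0 h q
end
end

section
/- For any odd prime p and any integer d ≥ 1, the set {θ^{(p,d)}_{a,b} : a, b ∈ ℤ} of formal power series contains at most (p+1)²/4 elements. -/
/-!
The series `θ_{a,b}` depends only on `(a, b)` modulo `p`, and it is invariant under the
automorphisms `(x, y) ↦ (-x, -y)` and `(x, y) ↦ (-x - y, y)` of `Q_d`, which preserve `pℤ²`.
In the coordinates `u = 2x + y`, `v = y` (so that `4 Q_d = u² + (4d - 1) v²`), invertible modulo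
`p` because `p` is odd, these automorphisms act as independent sign changes of `u` and `v`.
Hence `θ_{a,b}` only depends on the classes of `±u` and `±v` in `ℤ/p`, each of which has a
representative in `[0, (p - 1)/2]`.
-/

noncomputable section

/-- The coset theta series `θ^{(p,d)}_{a,b}`. -/
def cosetTheta (p d : ℕ) (a b : ℤ) : PowerSeries ℤ :=
  PowerSeries.mk fun k =>
    (Set.ncard {mn : ℤ × ℤ |
      Qform d ((p : ℤ) * mn.1 + a) ((p : ℤ) * mn.2 + b) = (k : ℤ)} : ℤ)

section

variable {p d : ℕ}

theorem cosetTheta_eq_of_equiv {a b a' b' : ℤ} (e : ℤ × ℤ ≃ ℤ × ℤ)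
    (he : ∀ mn : ℤ × ℤ, Qform d (p * (e mn).1 + a') (p * (e mn).2 + b') =
      Qform d (p * mn.1 + a) (p * mn.2 + b)) :
    cosetTheta p d a' b' = cosetTheta p d a b := by
  ext k
  simp only [cosetTheta, PowerSeries.coeff_mk]
  conv_rhs => rw [← Set.ncard_image_of_injective _ e.injective, e.image_eq_preimage_symm]
  congr 2
  ext mn
  simp [← he (e.symm mn)]

theorem cosetTheta_add_mul (a b s t : ℤ) :
    cosetTheta p d (a + p * s) (b + p * t) = cosetTheta p d a b :=
  cosetTheta_eq_of_equiv (Equiv.subRight (s, t)) fun _ ↦ by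
    simp only [Equiv.subRight_apply, Prod.fst_sub, Prod.snd_sub]; congr 1 <;> ring

theorem cosetTheta_eq_of_intCast_eq {a b a' b' : ℤ} (ha : (a' : ZMod p) = a)
    (hb : (b' : ZMod p) = b) : cosetTheta p d a' b' = cosetTheta p d a b := by
  obtain ⟨s, hs⟩ := (ZMod.intCast_eq_intCast_iff_dvd_sub _ _ _).1 ha.symm
  obtain ⟨t, ht⟩ := (ZMod.intCast_eq_intCast_iff_dvd_sub _ _ _).1 hb.symm
  rw [show a' = a + p * s by omega, show b' = b + p * t by omega, cosetTheta_add_mul]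

theorem cosetTheta_neg (a b : ℤ) : cosetTheta p d (-a) (-b) = cosetTheta p d a b :=
  cosetTheta_eq_of_equiv (Equiv.neg _) fun _ ↦ by
    simp only [Qform, Equiv.neg_apply, Prod.fst_neg, Prod.snd_neg]; ring

theorem cosetTheta_neg_sub (a b : ℤ) : cosetTheta p d (-a - b) b = cosetTheta p d a b :=
  cosetTheta_eq_of_equiv
    (Function.Involutive.toPerm (fun mn : ℤ × ℤ ↦ (-mn.1 - mn.2, mn.2)) fun _ ↦ by simp)
    fun _ ↦ by simp only [Qform, Function.Involutive.toPerm, Equiv.coe_fn_mk]; ring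

theorem cosetTheta_add_neg (a b : ℤ) : cosetTheta p d (a + b) (-b) = cosetTheta p d a b := by
  rw [← cosetTheta_neg a b, ← cosetTheta_neg_sub (a + b)]
  congr 1
  ring

theorem cosetTheta_eq_of_two_mul_add_eq {a b a' b' : ℤ} (h2 : IsUnit (2 : ZMod p))
    (hu : (2 * a' + b' : ZMod p) = 2 * a + b) (hv : (b' : ZMod p) = b) :
    cosetTheta p d a' b' = cosetTheta p d a b :=
  cosetTheta_eq_of_intCast_eq (h2.mul_left_cancel (add_right_cancel (hv ▸ hu))) hv

theorem cosetTheta_eq_of_eq_or_eq_neg {a b a' b' : ℤ} (h2 : IsUnit (2 : ZMod p))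
    (hu : (2 * a' + b' : ZMod p) = 2 * a + b ∨ (2 * a' + b' : ZMod p) = -(2 * a + b))
    (hv : (b' : ZMod p) = b ∨ (b' : ZMod p) = -b) :
    cosetTheta p d a' b' = cosetTheta p d a b := by
  rcases hu with hu | hu <;> rcases hv with hv | hv
  · exact cosetTheta_eq_of_two_mul_add_eq h2 hu hv
  · rw [← cosetTheta_add_neg a b]
    exact cosetTheta_eq_of_two_mul_add_eq h2 (by push_cast; linear_combination hu)
      (by push_cast; exact hv)
  · rw [← cosetTheta_neg_sub a b]
    exact cosetTheta_eq_of_two_mul_add_eq h2 (by push_cast; linear_combination hu) hv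
  · rw [← cosetTheta_neg a b]
    exact cosetTheta_eq_of_two_mul_add_eq h2 (by push_cast; linear_combination hu)
      (by push_cast; exact hv)

theorem ZMod.exists_le_half_eq_or_eq_neg {n : ℕ} [NeZero n] (x : ZMod n) :
    ∃ i ≤ n / 2, (i : ZMod n) = x ∨ (i : ZMod n) = -x := by
  refine ⟨x.valMinAbs.natAbs, x.natAbs_valMinAbs_le, ?_⟩
  rw [ZMod.natCast_natAbs_valMinAbs]
  split_ifs <;> simp

theorem range_cosetTheta_subset [NeZero p] (h2 : IsUnit (2 : ZMod p)) :
    (Set.range fun ab : ℤ × ℤ ↦ cosetTheta p d ab.1 ab.2) ⊆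
      Set.range fun ij : Fin (p / 2 + 1) × Fin (p / 2 + 1) ↦
        cosetTheta p d ((2⁻¹ * (ij.1 - ij.2 : ZMod p)).val) (ij.2 : ℕ) := by
  rintro _ ⟨⟨a, b⟩, rfl⟩
  obtain ⟨i, hi, hiu⟩ := ZMod.exists_le_half_eq_or_eq_neg (2 * (a : ZMod p) + (b : ZMod p))
  obtain ⟨j, hj, hjv⟩ := ZMod.exists_le_half_eq_or_eq_neg (b : ZMod p)
  refine ⟨(⟨i, Nat.lt_succ_of_le hi⟩, ⟨j, Nat.lt_succ_of_le hj⟩), ?_⟩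
  apply cosetTheta_eq_of_eq_or_eq_neg h2
  · simp only [Int.cast_natCast, ZMod.natCast_zmod_val]
    rwa [← mul_assoc, ZMod.mul_inv_of_unit _ h2, one_mul, sub_add_cancel]
  · simpa only [Int.cast_natCast] using hjv

theorem Nat.div_two_add_one_sq_of_odd {n : ℕ} (hn : Odd n) :
    (n / 2 + 1) ^ 2 = (n + 1) ^ 2 / 4 := by
  obtain ⟨k, rfl⟩ := hn
  rw [show (2 * k + 1) / 2 = k by omega, show (2 * k + 1 + 1) ^ 2 = 4 * (k + 1) ^ 2 by ring,
    Nat.mul_div_cancel_left _ (by norm_num)]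

end

theorem stmt3_general (p : ℕ) (hodd : Odd p) (d : ℕ) :
    (Set.range fun ab : ℤ × ℤ => cosetTheta p d ab.1 ab.2).Finite ∧
    (Set.range fun ab : ℤ × ℤ => cosetTheta p d ab.1 ab.2).ncard ≤ (p + 1) ^ 2 / 4 := by
  have : NeZero p := ⟨hodd.pos.ne'⟩
  have h2 : IsUnit (2 : ZMod p) := by
    exact_mod_cast (ZMod.isUnit_iff_coprime 2 p).2 (Nat.coprime_two_left.2 hodd)
  have hsub := range_cosetTheta_subset (d := d) h2
  refine ⟨(Set.finite_range _).subset hsub, ?_⟩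
  calc _ ≤ _ := Set.ncard_le_ncard hsub (Set.finite_range _)
    _ ≤ Nat.card (Fin (p / 2 + 1) × Fin (p / 2 + 1)) := by
      rw [← Nat.card_coe_set_eq]
      exact Finite.card_range_le _
    _ = (p / 2 + 1) ^ 2 := by simp [sq]
    _ = (p + 1) ^ 2 / 4 := Nat.div_two_add_one_sq_of_odd hodd

theorem stmt3 (p : ℕ) (hp : p.Prime) (hodd : Odd p) (d : ℕ) (hd : 1 ≤ d) :
    (Set.range fun ab : ℤ × ℤ => cosetTheta p d ab.1 ab.2).Finite ∧
    (Set.range fun ab : ℤ × ℤ => cosetTheta p d ab.1 ab.2).ncard ≤ (p + 1) ^ 2 / 4 :=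
  stmt3_general p hodd d
end
end
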